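/- arXiv:1101.3348 — 3 statements merged into one kernel-verified Lean document; each statement's English description precedes it below -/
import Mathlib

section
/- Let Φ ∈ ℝ^{m×N} be a matrix whose columns φ₁,…,φ_N all have unit Euclidean norm, and let μ = max_{i≠j} |⟨φ_i, φ_j⟩| be its coherence. Then for every integer K with 1 ≤ K ≤ N, every index set I ⊆ {1,…,N} with |I| ≤ K, and every vector q ∈ ℝ^{|I|}, one has (1 − (K−1)μ)·‖q‖₂² ≤ ‖Φ_I q‖₂² ≤ (1 + (K−1)μ)·‖q‖₂². In other words, Φ satisfies the restricted isometry property of order K with constant δ_K ≤ (K−1)μ. -/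
/-- A matrix `Φ ∈ ℝ^{m×N}` with unit-norm columns and coherence
`μ = max_{i≠j} |⟨φᵢ,φⱼ⟩|` satisfies the restricted isometry property of order `K` with
constant `δ_K ≤ (K−1)μ`: for every index set `I` with `|I| ≤ K` and every vector `q`
supported on `I`, `(1 − (K−1)μ)‖q‖₂² ≤ ‖Φ_I q‖₂² ≤ (1 + (K−1)μ)‖q‖₂²`. -/
theorem rip_of_coherence
    (m N K : ℕ) (hK1 : 1 ≤ K) (hKN : K ≤ N)
    (Φ : Matrix (Fin m) (Fin N) ℝ)
    (hnorm : ∀ i : Fin N, ∑ l : Fin m, (Φ l i) ^ 2 = 1)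
    (μ : ℝ)
    (hμ : ∀ i j : Fin N, i ≠ j → |∑ l : Fin m, Φ l i * Φ l j| ≤ μ) :
    ∀ I : Finset (Fin N), I.card ≤ K → ∀ q : Fin N → ℝ, (∀ i ∉ I, q i = 0) →
      (1 - ((K : ℝ) - 1) * μ) * (∑ i : Fin N, (q i) ^ 2) ≤
          ∑ l : Fin m, (∑ i : Fin N, Φ l i * q i) ^ 2 ∧
        ∑ l : Fin m, (∑ i : Fin N, Φ l i * q i) ^ 2 ≤
          (1 + ((K : ℝ) - 1) * μ) * (∑ i : Fin N, (q i) ^ 2) := by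
  intro I hI q hq
  set G : Fin N → Fin N → ℝ := fun i j => ∑ l, Φ l i * Φ l j with hG
  have hE : ∑ l : Fin m, (∑ i : Fin N, Φ l i * q i) ^ 2
      = ∑ i : Fin N, ∑ j : Fin N, q i * q j * G i j := by
    have h1 : ∀ l : Fin m, (∑ i : Fin N, Φ l i * q i) ^ 2
        = ∑ i : Fin N, ∑ j : Fin N, q i * q j * (Φ l i * Φ l j) := by
      intro l
      rw [sq, Finset.sum_mul_sum]
      exact Finset.sum_congr rfl fun i _ => Finset.sum_congr rfl fun j _ => by ring
    simp only [h1]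
    rw [Finset.sum_comm]
    refine Finset.sum_congr rfl fun i _ => ?_
    rw [Finset.sum_comm]
    refine Finset.sum_congr rfl fun j _ => ?_
    rw [← Finset.mul_sum]
  set T : ℝ := ∑ i : Fin N, (q i) ^ 2 with hT
  have hTnn : 0 ≤ T := Finset.sum_nonneg fun i _ => sq_nonneg _
  set R : ℝ := ∑ i : Fin N, ∑ j ∈ Finset.univ.erase i, q i * q j * G i j with hR
  have hsplit : ∑ l : Fin m, (∑ i : Fin N, Φ l i * q i) ^ 2 = T + R := by
    rw [hE, hT, hR, ← Finset.sum_add_distrib]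
    refine Finset.sum_congr rfl fun i _ => ?_
    have hdiag : q i * q i * G i i = q i ^ 2 := by
      have hGi : G i i = 1 := by
        simpa [hG, sq] using hnorm i
      rw [hGi]; ring
    rw [← hdiag]
    exact (Finset.add_sum_erase _ _ (Finset.mem_univ i)).symm
  have habs : |R| ≤ ((K : ℝ) - 1) * μ * T := by
    rcases eq_or_lt_of_le hK1 with hK | hK2
    · -- K = 1
      have hR0 : R = 0 := by
        rw [hR]
        refine Finset.sum_eq_zero fun i _ => Finset.sum_eq_zero fun j hj => ?_
        have hji : j ≠ i := Finset.ne_of_mem_erase hj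
        by_cases hiI : i ∈ I
        · have hjI : j ∉ I := by
            intro hjI
            have : 1 < I.card := Finset.one_lt_card.mpr ⟨i, hiI, j, hjI, hji.symm⟩
            omega
          rw [hq j hjI]; ring
        · rw [hq i hiI]; ring
      rw [hR0, ← hK]
      simp
    · -- 2 ≤ K, hence N ≥ 2 and μ ≥ 0
      have hN2 : 2 ≤ N := le_trans hK2 hKN
      have hμnn : 0 ≤ μ := by
        have h01 : (⟨0, by omega⟩ : Fin N) ≠ ⟨1, by omega⟩ := by
          simp [Fin.ext_iff]
        exact le_trans (abs_nonneg _) (hμ _ _ h01)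
      set S : ℝ := ∑ i : Fin N, |q i| with hS
      have hSnn : 0 ≤ S := Finset.sum_nonneg fun i _ => abs_nonneg _
      have hCS : S ^ 2 ≤ (K : ℝ) * T := by
        have hSI : S = ∑ i ∈ I, |q i| := by
          rw [hS]
          exact (Finset.sum_subset (Finset.subset_univ I)
            (fun i _ hiI => by rw [hq i hiI, abs_zero])).symm
        have hTI : T = ∑ i ∈ I, (q i) ^ 2 := by
          rw [hT]
          exact (Finset.sum_subset (Finset.subset_univ I)
            (fun i _ hiI => by rw [hq i hiI]; ring)).symm
        have := Finset.sum_mul_sq_le_sq_mul_sq I (fun i => |q i|) (fun _ => 1)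
        simp only [mul_one, one_pow] at this
        have hcard : (∑ _i ∈ I, (1 : ℝ)) = (I.card : ℝ) := by simp
        rw [hcard] at this
        have hsqabs : ∑ i ∈ I, |q i| ^ 2 = ∑ i ∈ I, (q i) ^ 2 :=
          Finset.sum_congr rfl fun i _ => sq_abs _
        rw [hsqabs] at this
        calc S ^ 2 ≤ (∑ i ∈ I, (q i) ^ 2) * (I.card : ℝ) := by rw [hSI]; exact this
          _ ≤ T * (K : ℝ) := by
              rw [← hTI]
              exact mul_le_mul_of_nonneg_left (by exact_mod_cast hI) hTnn
          _ = (K : ℝ) * T := by ring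
      have hstep : |R| ≤ μ * (S ^ 2 - T) := by
        calc |R| ≤ ∑ i : Fin N, |∑ j ∈ Finset.univ.erase i, q i * q j * G i j| :=
              Finset.abs_sum_le_sum_abs _ _
          _ ≤ ∑ i : Fin N, ∑ j ∈ Finset.univ.erase i, |q i| * |q j| * μ := by
              refine Finset.sum_le_sum fun i _ => ?_
              refine le_trans (Finset.abs_sum_le_sum_abs _ _) ?_
              refine Finset.sum_le_sum fun j hj => ?_
              have hji : j ≠ i := Finset.ne_of_mem_erase hj
              rw [abs_mul, abs_mul]
              exact mul_le_mul_of_nonneg_left (hμ i j hji.symm)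
                (mul_nonneg (abs_nonneg _) (abs_nonneg _))
          _ = ∑ i : Fin N, |q i| * μ * (S - |q i|) := by
              refine Finset.sum_congr rfl fun i _ => ?_
              rw [Finset.sum_erase_eq_sub (Finset.mem_univ i)]
              have hrow : ∑ x : Fin N, |q i| * |q x| * μ = |q i| * μ * S := by
                rw [hS, Finset.mul_sum]
                exact Finset.sum_congr rfl fun j _ => by ring
              rw [hrow]
              ring
          _ = μ * (S ^ 2 - T) := by
              have habs2 : ∀ i, |q i| ^ 2 = (q i) ^ 2 := fun i => sq_abs _
              simp only [mul_sub, Finset.sum_sub_distrib]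
              rw [show (∑ i : Fin N, |q i| * μ * S) = μ * S * ∑ i : Fin N, |q i| from by
                rw [Finset.mul_sum]; exact Finset.sum_congr rfl fun i _ => by ring]
              rw [show (∑ i : Fin N, |q i| * μ * |q i|) = μ * ∑ i : Fin N, |q i| ^ 2 from by
                rw [Finset.mul_sum]; exact Finset.sum_congr rfl fun i _ => by ring]
              simp only [habs2]
              rw [← hS, ← hT]; ring
      have : μ * (S ^ 2 - T) ≤ ((K : ℝ) - 1) * μ * T := by
        nlinarith [mul_le_mul_of_nonneg_left hCS hμnn]
      linarith
  obtain ⟨hlo, hhi⟩ := abs_le.mp habs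
  constructor
  · rw [hsplit]
    nlinarith
  · rw [hsplit]
    nlinarith
end

section
/- Let Φ ∈ ℝ^{m×N} be a matrix whose columns all have unit Euclidean norm and whose coherence satisfies μ ≤ 1/(2K) for some integer K ≥ 1. Then Φ satisfies the restricted isometry property of order K with constant δ_K ≤ 1/2; that is, for every index set I ⊆ {1,…,N} with |I| ≤ K and every q ∈ ℝ^{|I|}, (1/2)·‖q‖₂² ≤ ‖Φ_I q‖₂² ≤ (3/2)·‖q‖₂². -/
/-- A matrix `Φ ∈ ℝ^{m×N}` with unit-norm columns whose coherence satisfies `μ ≤ 1/(2K)`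
satisfies the restricted isometry property of order `K` with constant `δ_K ≤ 1/2`: for every
index set `I` with `|I| ≤ K` and every vector `q` supported on `I`,
`(1/2)‖q‖₂² ≤ ‖Φ_I q‖₂² ≤ (3/2)‖q‖₂²`. -/
theorem rip_half_of_coherence_le
    (m N K : ℕ) (hK1 : 1 ≤ K)
    (Φ : Matrix (Fin m) (Fin N) ℝ)
    (hnorm : ∀ i : Fin N, ∑ l : Fin m, (Φ l i) ^ 2 = 1)
    (hμ : ∀ i j : Fin N, i ≠ j → |∑ l : Fin m, Φ l i * Φ l j| ≤ 1 / (2 * K)) :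
    ∀ I : Finset (Fin N), I.card ≤ K → ∀ q : Fin N → ℝ, (∀ i ∉ I, q i = 0) →
      (1 / 2 : ℝ) * (∑ i : Fin N, (q i) ^ 2) ≤
          ∑ l : Fin m, (∑ i : Fin N, Φ l i * q i) ^ 2 ∧
        ∑ l : Fin m, (∑ i : Fin N, Φ l i * q i) ^ 2 ≤
          (3 / 2 : ℝ) * (∑ i : Fin N, (q i) ^ 2) := by
  intro I hI q hq
  set G : Fin N → Fin N → ℝ := fun i j => ∑ l, Φ l i * Φ l j with hG
  set S : ℝ := ∑ i, (q i)^2 with hS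
  set T : ℝ := ∑ i, |q i| with hT
  have hSnn : 0 ≤ S := Finset.sum_nonneg fun i _ => sq_nonneg _
  have hKpos : (0:ℝ) < 2 * K := by positivity
  have hK1' : (1:ℝ) ≤ K := by exact_mod_cast hK1
  have hE : ∑ l, (∑ i, Φ l i * q i)^2 = ∑ i, ∑ j, q i * q j * G i j := by
    simp only [sq, Finset.sum_mul_sum]
    rw [Finset.sum_comm]
    refine Finset.sum_congr rfl fun i _ => ?_
    rw [Finset.sum_comm]
    refine Finset.sum_congr rfl fun j _ => ?_
    simp only [hG, Finset.mul_sum]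
    exact Finset.sum_congr rfl fun l _ => by ring
  have hGii : ∀ i, G i i = 1 := fun i => by
    simpa [hG, sq] using hnorm i
  set R : ℝ := ∑ i, ∑ j ∈ Finset.univ.erase i, q i * q j * G i j with hR
  have hEsplit : ∑ i, ∑ j, q i * q j * G i j = S + R := by
    rw [hS, hR, ← Finset.sum_add_distrib]
    refine Finset.sum_congr rfl fun i _ => ?_
    rw [← Finset.add_sum_erase _ _ (Finset.mem_univ i), hGii i]
    ring
  -- ∑ over I of |q| stuff
  have hT' : T = ∑ i ∈ I, |q i| := by
    rw [hT]
    refine (Finset.sum_subset (Finset.subset_univ I) fun x _ hx => by simp [hq x hx]).symm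
  have hSI : ∑ i ∈ I, |q i| ^ 2 ≤ S := by
    rw [hS]
    calc ∑ i ∈ I, |q i|^2 = ∑ i ∈ I, (q i)^2 := Finset.sum_congr rfl fun i _ => sq_abs _
      _ ≤ ∑ i : Fin N, (q i)^2 :=
        Finset.sum_le_sum_of_subset_of_nonneg (Finset.subset_univ I) fun i _ _ => sq_nonneg _
  have hT2 : T^2 ≤ K * S := by
    rw [hT']
    calc (∑ i ∈ I, |q i|)^2 ≤ I.card * ∑ i ∈ I, |q i|^2 := sq_sum_le_card_mul_sum_sq
      _ ≤ K * S := by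
          have h1 : (I.card : ℝ) ≤ K := by exact_mod_cast hI
          have h2 : (0:ℝ) ≤ ∑ i ∈ I, |q i|^2 := Finset.sum_nonneg fun i _ => sq_nonneg _
          exact mul_le_mul h1 hSI h2 (by positivity)
  have hoff : ∑ i : Fin N, ∑ j ∈ Finset.univ.erase i, |q i| * |q j| = T^2 - S := by
    have : ∀ i : Fin N, ∑ j ∈ Finset.univ.erase i, |q i| * |q j|
        = |q i| * T - |q i|^2 := by
      intro i
      rw [← Finset.mul_sum, Finset.sum_erase_eq_sub (Finset.mem_univ i), ← hT]
      ring
    rw [Finset.sum_congr rfl fun i _ => this i, Finset.sum_sub_distrib, ← Finset.sum_mul, ← hT,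
      hS]
    simp [sq_abs, sq]
  have hRbound : |R| ≤ S / 2 := by
    have h1 : |R| ≤ ∑ i : Fin N, ∑ j ∈ Finset.univ.erase i, |q i| * |q j| * (1/(2*K)) := by
      refine (Finset.abs_sum_le_sum_abs _ _).trans (Finset.sum_le_sum fun i _ => ?_)
      refine (Finset.abs_sum_le_sum_abs _ _).trans (Finset.sum_le_sum fun j hj => ?_)
      rw [abs_mul, abs_mul]
      have hji : j ≠ i := Finset.ne_of_mem_erase hj
      exact mul_le_mul_of_nonneg_left (hμ i j (Ne.symm hji)) (by positivity)
    have h2 : ∑ i : Fin N, ∑ j ∈ Finset.univ.erase i, |q i| * |q j| * (1/(2*K))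
        = (T^2 - S) * (1/(2*K)) := by
      rw [← hoff]
      simp only [← Finset.sum_mul]
    rw [h2] at h1
    have : (T^2 - S) * (1/(2*K)) ≤ S / 2 := by
      rw [mul_one_div, div_le_div_iff₀ hKpos (by norm_num : (0:ℝ) < 2)]
      nlinarith
    linarith
  have hRle := abs_le.mp hRbound
  rw [hE, hEsplit]
  constructor <;> linarith [hRle.1, hRle.2]
end

section
/- Let C ⊆ 𝔽₂^m be an s-dimensional linear code, and let Φ be the m×(2^s−1) matrix whose columns are (1/√m)·BPSK(c) for the nonzero codewords c ∈ C. Let r < s, set K = 2^r, and suppose Φ satisfies the binary restricted isometry upper bound of order K with constant δ: for every index set I of size K, ‖Φ_I·1‖₂² ≤ (1+δ)·K, where 1 is the all-ones vector of length K. Then every r-dimensional linear subcode V ⊆ C has support of size d ≥ m·(1 − (1+δ)/K). In particular, if δ < √2 − 1, then d > m·(1 − √2/K); equivalently, the r-th generalized Hamming weight satisfies d_r(C) > m·(1 − √2/K). -/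
/-- The BPSK map: sends a binary word `c ∈ 𝔽₂^m` to the real vector whose `j`-th entry is
`+1` if `c j = 0` and `-1` if `c j = 1`. -/
noncomputable def bpsk {m : ℕ} (c : Fin m → ZMod 2) : Fin m → ℝ :=
  fun j => if c j = 0 then 1 else -1

/-- The support of a subspace `V ⊆ 𝔽₂^m`: the set of coordinates at which some element of
`V` has a `1`. -/
def suppSet {m : ℕ} (V : Submodule (ZMod 2) (Fin m → ZMod 2)) : Set (Fin m) :=
  {j | ∃ v ∈ V, v j = 1}

/-! The sum of the BPSK images of a subspace `V` vanishes at every coordinate of its support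
(the character `v ↦ (-1)^(v j)` of `V` is then nontrivial) and equals `|V|` elsewhere;
translating `V` by a codeword only flips signs coordinatewise. Taking for the `K = |V|` columns
of the RIP condition a coset `v₀ + V` with `v₀ ∈ C \ V`, whose elements are nonzero codewords,
the RIP bound therefore reads `(m - d) K² / m ≤ (1 + δ) K`, where `d` is the support size
of `V`. -/

lemma bpsk_of_eq_zero {m : ℕ} {c : Fin m → ZMod 2} {j : Fin m} (h : c j = 0) : bpsk c j = 1 :=
  if_pos h

lemma bpsk_of_eq_one {m : ℕ} {c : Fin m → ZMod 2} {j : Fin m} (h : c j = 1) : bpsk c j = -1 :=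
  if_neg (by simp [h])

lemma bpsk_add {m : ℕ} (a b : Fin m → ZMod 2) (j : Fin m) :
    bpsk (a + b) j = bpsk a j * bpsk b j := by
  have h01 : ∀ x : ZMod 2, x = 0 ∨ x = 1 := by decide
  have h11 : (1 + 1 : ZMod 2) = 0 := rfl
  simp only [bpsk, Pi.add_apply]
  rcases h01 (a j) with ha | ha <;> rcases h01 (b j) with hb | hb <;> simp [ha, hb, h11]

lemma bpsk_sq {m : ℕ} (c : Fin m → ZMod 2) (j : Fin m) : bpsk c j ^ 2 = 1 := by
  unfold bpsk; split_ifs <;> norm_num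

section Coset

variable {R M : Type*} [Ring R] [AddCommGroup M] [Module R M] (V : Submodule R M) [Fintype V]

def cosetFinset (v₀ : M) : Finset M :=
  Finset.univ.map ((Function.Embedding.subtype (· ∈ V)).trans (addLeftEmbedding v₀))

variable {V} {v₀ w : M}

lemma card_cosetFinset : (cosetFinset V v₀).card = Fintype.card V := by
  simp [cosetFinset]

lemma mem_cosetFinset : w ∈ cosetFinset V v₀ ↔ ∃ v ∈ V, v₀ + v = w := by
  simp [cosetFinset]

lemma mem_of_mem_cosetFinset {C : Submodule R M} (hVC : V ≤ C) (hv₀ : v₀ ∈ C)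
    (hw : w ∈ cosetFinset V v₀) : w ∈ C := by
  obtain ⟨v, hv, rfl⟩ := mem_cosetFinset.mp hw
  exact C.add_mem hv₀ (hVC hv)

lemma ne_zero_of_mem_cosetFinset (hv₀ : v₀ ∉ V) (hw : w ∈ cosetFinset V v₀) : w ≠ 0 := by
  obtain ⟨v, hv, rfl⟩ := mem_cosetFinset.mp hw
  exact fun h => hv₀ ((add_mem_cancel_right hv).mp (h ▸ V.zero_mem))

end Coset

section CharacterSum

variable {m : ℕ} (V : Submodule (ZMod 2) (Fin m → ZMod 2)) [Fintype V] {j : Fin m}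

lemma sum_bpsk_of_mem_suppSet (hj : j ∈ suppSet V) :
    ∑ v : V, bpsk (v : Fin m → ZMod 2) j = 0 := by
  obtain ⟨v₁, hv₁, hv₁j⟩ := hj
  have htrans : ∑ v : V, bpsk (v₁ + (v : Fin m → ZMod 2)) j =
      ∑ v : V, bpsk (v : Fin m → ZMod 2) j :=
    Fintype.sum_equiv (Equiv.addLeft (⟨v₁, hv₁⟩ : V)) _ _ fun v => rfl
  simp only [bpsk_add, bpsk_of_eq_one hv₁j, neg_one_mul, Finset.sum_neg_distrib] at htrans
  linarith

lemma sum_bpsk_of_notMem_suppSet (hj : j ∉ suppSet V) :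
    ∑ v : V, bpsk (v : Fin m → ZMod 2) j = Fintype.card V := by
  have hv : ∀ v : V, bpsk (v : Fin m → ZMod 2) j = 1 := fun v =>
    bpsk_of_eq_zero <| by_contra fun h => hj ⟨v, v.2, Fin.eq_one_of_ne_zero _ h⟩
  simp [hv]

lemma sum_sq_sum_bpsk :
    ∑ j, (∑ v : V, bpsk (v : Fin m → ZMod 2) j) ^ 2 =
      (suppSet V)ᶜ.ncard * (Fintype.card V : ℝ) ^ 2 := by
  classical
  rw [Set.ncard_eq_toFinset_card', ← Finset.sum_subset (Finset.subset_univ (suppSet V)ᶜ.toFinset)]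
  · rw [Finset.sum_congr rfl fun j hj => by
      rw [sum_bpsk_of_notMem_suppSet V (Set.mem_toFinset.mp hj)]]
    simp
  · intro j _ hj
    rw [Set.mem_toFinset, Set.mem_compl_iff, not_not] at hj
    simp [sum_bpsk_of_mem_suppSet V hj]

lemma sum_sq_sum_cosetFinset_bpsk (v₀ : Fin m → ZMod 2) (a : ℝ) :
    ∑ j, (∑ w ∈ cosetFinset V v₀, a * bpsk w j) ^ 2 =
      a ^ 2 * ((suppSet V)ᶜ.ncard * (Fintype.card V : ℝ) ^ 2) := by
  simp only [cosetFinset, Finset.sum_map, Function.Embedding.trans_apply,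
    Function.Embedding.coe_subtype, addLeftEmbedding_apply, ← Finset.mul_sum, mul_pow, bpsk_add,
    bpsk_sq, one_mul, sum_sq_sum_bpsk]

end CharacterSum

/-- Let `C ⊆ 𝔽₂^m` be an `s`-dimensional linear code, `r < s`, `K = 2^r`, and let `Φ` be the
matrix whose columns are the normalized BPSK images `(1/√m)·BPSK(c)` of the nonzero
codewords of `C`. If `Φ` satisfies the binary restricted isometry upper bound of order `K`
with constant `δ` (i.e. for every set `T` of `K` distinct nonzero codewords,
`‖Σ_{w∈T} (1/√m)·BPSK(w)‖₂² ≤ (1+δ)·K`), then every `r`-dimensional subcode `V ⊆ C` has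
support of size `d ≥ m·(1 − (1+δ)/K)`; in particular if `δ < √2 − 1` then
`d > m·(1 − √2/K)`, i.e. the `r`-th generalized Hamming weight satisfies
`d_r(C) > m·(1 − √2/K)`. -/
theorem support_weight_lower_of_binary_rip
    (m s r K : ℕ) (C : Submodule (ZMod 2) (Fin m → ZMod 2))
    (hs : Module.finrank (ZMod 2) C = s) (hr : r < s) (hK : K = 2 ^ r)
    (δ : ℝ)
    (hRIP : ∀ T : Finset (Fin m → ZMod 2), (∀ w ∈ T, w ∈ C ∧ w ≠ 0) → T.card = K →
      ∑ j : Fin m, (∑ w ∈ T, (1 / Real.sqrt m) * bpsk w j) ^ 2 ≤ (1 + δ) * (K : ℝ)) :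
    ∀ V : Submodule (ZMod 2) (Fin m → ZMod 2), V ≤ C →
      Module.finrank (ZMod 2) V = r →
        ((m : ℝ) * (1 - (1 + δ) / (K : ℝ)) ≤ ((suppSet V).ncard : ℝ)) ∧
        (δ < Real.sqrt 2 - 1 →
          (m : ℝ) * (1 - Real.sqrt 2 / (K : ℝ)) < ((suppSet V).ncard : ℝ)) := by
  classical
  intro V hVC hV
  have hm : (0 : ℝ) < m := by
    have := hs ▸ Submodule.finrank_le C
    rw [Module.finrank_fin_fun] at this
    exact_mod_cast Nat.zero_lt_of_lt (hr.trans_le this)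
  have hKpos : (0 : ℝ) < K := by rw [hK]; positivity
  have hcard : Fintype.card V = K := by
    rw [Module.card_eq_pow_finrank (K := ZMod 2), ZMod.card, hV, hK]
  obtain ⟨v₀, hv₀C, hv₀V⟩ := SetLike.exists_of_lt <| hVC.lt_of_ne fun h => by
    subst h; omega
  have hRIPcoset := hRIP (cosetFinset V v₀)
    (fun w hw => ⟨mem_of_mem_cosetFinset hVC hv₀C hw, ne_zero_of_mem_cosetFinset hv₀V hw⟩)
    (card_cosetFinset.trans hcard)
  rw [sum_sq_sum_cosetFinset_bpsk, hcard, one_div, inv_pow, Real.sq_sqrt hm.le,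
    inv_mul_le_iff₀ hm] at hRIPcoset
  have hcompl : ((suppSet V)ᶜ.ncard : ℝ) * K ≤ (1 + δ) * m := by nlinarith
  have hsupp : ((suppSet V).ncard : ℝ) + (suppSet V)ᶜ.ncard = m := by
    exact_mod_cast (Set.ncard_add_ncard_compl (suppSet V)).trans (Nat.card_fin m)
  have hweight : (m : ℝ) * (1 - (1 + δ) / K) ≤ (suppSet V).ncard :=
    calc (m : ℝ) * (1 - (1 + δ) / K) = m - (1 + δ) * m / K := by ring
      _ ≤ m - (suppSet V)ᶜ.ncard := by gcongr; rwa [le_div_iff₀ hKpos]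
      _ = (suppSet V).ncard := by linarith
  refine ⟨hweight, fun hδ => hweight.trans_lt' ?_⟩
  gcongr
  linarith
end
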